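/- The point [2,2,2,-3,-3] in the hyperplane x1+...+x5=0 of P^4 is a singular point of the quartic x1^4+...+x5^4 - t(x1^2+...+x5^2)^2 = 0 if and only if t = 7/30. -/

import Mathlib

/-!
The gradient component `4 xᵢ³ - 4t (∑ xⱼ²) xᵢ` takes one value where `xᵢ = 2` and one where
`xᵢ = -3`, and `∑ xⱼ² = 30`. Since `a³ - u a - (b³ - u b) = (a - b)(a² + a b + b² - u)`, the two
values agree iff `30 t = 2² + 2·(-3) + (-3)² = 7`.
-/

theorem cube_sub_mul_eq_iff {R : Type*} [CommRing R] [NoZeroDivisors R] {a b : R} (hab : a ≠ b)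
    (u : R) :
    a ^ 3 - u * a = b ^ 3 - u * b ↔ u = a ^ 2 + a * b + b ^ 2 := by
  constructor
  · intro h
    have hfactor : (a - b) * (a ^ 2 + a * b + b ^ 2 - u) = 0 := by linear_combination h
    have := (mul_eq_zero.1 hfactor).resolve_left (sub_ne_zero.2 hab)
    linear_combination -this
  · rintro rfl
    ring

/-- [2,2,2,-3,-3] is a singular point of S_t iff t = 7/30. -/
theorem stmt1 (t : ℚ) :
    (∃ c : ℚ, ∀ i : Fin 5,
      4 * (![2,2,2,-3,-3] : Fin 5 → ℚ) i ^ 3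
        - 4 * t * (∑ j : Fin 5, (![2,2,2,-3,-3] : Fin 5 → ℚ) j ^ 2)
            * (![2,2,2,-3,-3] : Fin 5 → ℚ) i = c)
    ↔ t = 7/30 := by
  have hsum : ∑ j : Fin 5, (![2,2,2,-3,-3] : Fin 5 → ℚ) j ^ 2 = 30 := by
    simp [Fin.sum_univ_five]
    norm_num
  rw [hsum]
  constructor
  · rintro ⟨c, hc⟩
    have hvalues : (2 : ℚ) ^ 3 - t * 30 * 2 = (-3) ^ 3 - t * 30 * (-3) := by
      have := (hc 0).trans (hc 3).symm
      simp only [Matrix.cons_val] at this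
      linarith
    have := (cube_sub_mul_eq_iff (by norm_num) (t * 30)).1 hvalues
    linarith
  · rintro rfl
    exact ⟨-24, fun i => by fin_cases i <;> norm_num⟩
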